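/- Frame property: if g, γ ∈ C^N satisfy ⟨T_n γ, T_n g⟩ ≠ 0 for all vertices n, then the family {g_{n,k}}_{n=1,...,N; k=0,...,N-1} is a frame for C^N; explicitly, with a = min_i |⟨T_i γ, T_i g⟩| / ‖T_i γ‖_2 and b = max_i ‖T_i g‖_2, one has a² N ‖f‖_2² ≤ Σ_{n,k} |⟨f, g_{n,k}⟩|² ≤ b² N ‖f‖_2² for all f ∈ C^N. -/

import Mathlib

open Finset

noncomputable def gft {N : ℕ} (χ : Fin N → Fin N → ℂ) (f : Fin N → ℂ) (ℓ : Fin N) : ℂ :=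
  ∑ i, f i * starRingEnd ℂ (χ ℓ i)

noncomputable def gtrans {N : ℕ} (χ : Fin N → Fin N → ℂ) (n : Fin N) (f : Fin N → ℂ)
    (i : Fin N) : ℂ :=
  ((Real.sqrt N : ℝ) : ℂ) * ∑ ℓ, gft χ f ℓ * starRingEnd ℂ (χ ℓ n) * χ ℓ i

noncomputable def ip {N : ℕ} (f g : Fin N → ℂ) : ℂ :=
  ∑ i, f i * starRingEnd ℂ (g i)

noncomputable def nrm {N : ℕ} (f : Fin N → ℂ) : ℝ :=
  Real.sqrt (∑ i, ‖f i‖ ^ 2)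

def IsONB {N : ℕ} (χ : Fin N → Fin N → ℂ) : Prop :=
  ∀ ℓ ℓ' : Fin N, (∑ i, χ ℓ i * starRingEnd ℂ (χ ℓ' i)) = if ℓ = ℓ' then 1 else 0

noncomputable def atom {N : ℕ} (χ : Fin N → Fin N → ℂ) (g : Fin N → ℂ) (n k i : Fin N) : ℂ :=
  (N : ℂ) * χ k i * ∑ ℓ, gft χ g ℓ * starRingEnd ℂ (χ ℓ n) * χ ℓ i

/-! Parseval's identity, once for the basis `χ` in the modulation index `k` and once in the
translation index `n`, gives `∑ n, ∑ k, |⟨f, g_{n,k}⟩|² = N ∑ i, |f i|² ‖T_i g‖²`: both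
`∑ n, |T_n g (i)|²` and `‖T_i g‖²` equal `N ∑ ℓ, |ĝ ℓ|² |χ_ℓ(i)|²`. The frame bounds then follow
from `a ≤ ‖T_i g‖ ≤ b`, the lower one being Cauchy–Schwarz for `⟨T_i γ, T_i g⟩`. -/

open ComplexConjugate

section Parseval

variable {𝕜 ι τ : Type*} [RCLike 𝕜] [Fintype ι] [Fintype τ] [DecidableEq ι]

theorem sum_norm_sq_sum_mul_of_orthonormal (e : ι → τ → 𝕜)
    (he : ∀ p q, ∑ t, e p t * conj (e q t) = if p = q then 1 else 0) (c : ι → 𝕜) :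
    ∑ t, ‖∑ p, c p * e p t‖ ^ 2 = ∑ p, ‖c p‖ ^ 2 := by
  apply RCLike.ofReal_injective (K := 𝕜)
  push_cast
  simp only [← RCLike.mul_conj, map_sum, map_mul, sum_mul_sum]
  rw [sum_comm]
  refine sum_congr rfl fun p _ => ?_
  rw [sum_comm]
  have hpq : ∀ q, ∑ t, c p * e p t * (conj (c q) * conj (e q t))
      = c p * conj (c q) * if p = q then 1 else 0 := fun q => by
    rw [← he, mul_sum]; exact sum_congr rfl fun t _ => by ring
  simp [hpq]

theorem sum_norm_sq_sum_mul_conj_of_orthonormal (e : ι → τ → 𝕜)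
    (he : ∀ p q, ∑ t, e p t * conj (e q t) = if p = q then 1 else 0) (c : ι → 𝕜) :
    ∑ t, ‖∑ p, c p * conj (e p t)‖ ^ 2 = ∑ p, ‖c p‖ ^ 2 := by
  have h := sum_norm_sq_sum_mul_of_orthonormal e he (conj ∘ c)
  simp only [Function.comp_apply, RCLike.norm_conj] at h
  rw [← h]
  refine sum_congr rfl fun t _ => ?_
  rw [← RCLike.norm_conj, map_sum]
  simp only [map_mul, RCLike.conj_conj]

end Parseval

section GraphGabor

variable {N : ℕ} {χ : Fin N → Fin N → ℂ}

theorem IsONB.transpose (hχ : IsONB χ) : IsONB fun i ℓ => χ ℓ i := by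
  let M : Matrix (Fin N) (Fin N) ℂ := Matrix.of χ
  have hM : M * star M = 1 := by
    ext ℓ ℓ'
    simpa [Matrix.mul_apply, Matrix.one_apply, Matrix.star_apply, M] using hχ ℓ ℓ'
  intro i j
  have h := congrArg conj (Matrix.ext_iff.mpr (mul_eq_one_comm.mp hM) i j)
  simpa [Matrix.mul_apply, Matrix.one_apply, Matrix.star_apply, M, apply_ite conj, mul_comm,
    eq_comm] using h

theorem nrm_sq (u : Fin N → ℂ) : nrm u ^ 2 = ∑ i, ‖u i‖ ^ 2 :=
  Real.sq_sqrt (by positivity)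

theorem nrm_nonneg (u : Fin N → ℂ) : 0 ≤ nrm u :=
  Real.sqrt_nonneg _

theorem norm_ip_le_nrm_mul_nrm (u v : Fin N → ℂ) : ‖ip u v‖ ≤ nrm u * nrm v :=
  calc ‖ip u v‖ ≤ ∑ i, ‖u i‖ * ‖v i‖ := by
        simpa only [ip, norm_mul, Complex.norm_conj] using
          norm_sum_le univ fun i => u i * conj (v i)
    _ ≤ nrm u * nrm v := Real.sum_mul_le_sqrt_mul_sqrt _ _ _

/-- Also for `nrm u = 0`, where the quotient is `0` by the convention `x / 0 = 0`. -/
theorem norm_ip_div_nrm_le (u v : Fin N → ℂ) : ‖ip u v‖ / nrm u ≤ nrm v := by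
  rcases (nrm_nonneg u).eq_or_lt with h | h
  · rw [← h, div_zero]
    exact nrm_nonneg v
  · rw [div_le_iff₀ h, mul_comm]
    exact norm_ip_le_nrm_mul_nrm u v

theorem norm_sqrt_mul_sq (z : ℂ) : ‖((√N : ℝ) : ℂ) * z‖ ^ 2 = N * ‖z‖ ^ 2 := by
  rw [norm_mul, mul_pow, Complex.norm_real, Real.norm_of_nonneg (Real.sqrt_nonneg _),
    Real.sq_sqrt (Nat.cast_nonneg _)]

theorem nrm_gtrans_sq (hχ : IsONB χ) (g : Fin N → ℂ) (i : Fin N) :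
    nrm (gtrans χ i g) ^ 2 = N * ∑ ℓ, ‖gft χ g ℓ‖ ^ 2 * ‖χ ℓ i‖ ^ 2 := by
  simp_rw [nrm_sq, gtrans, norm_sqrt_mul_sq, ← mul_sum,
    sum_norm_sq_sum_mul_of_orthonormal χ hχ, norm_mul, Complex.norm_conj, mul_pow]

theorem sum_norm_gtrans_apply_sq (hχ : IsONB χ) (g : Fin N → ℂ) (i : Fin N) :
    ∑ n, ‖gtrans χ n g i‖ ^ 2 = N * ∑ ℓ, ‖gft χ g ℓ‖ ^ 2 * ‖χ ℓ i‖ ^ 2 := by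
  simp_rw [gtrans, norm_sqrt_mul_sq, ← mul_sum, mul_right_comm (gft χ g _),
    sum_norm_sq_sum_mul_conj_of_orthonormal χ hχ, norm_mul, mul_pow]

theorem ip_atom (f g : Fin N → ℂ) (n k : Fin N) :
    ip f (atom χ g n k) = (√N : ℝ) * ∑ i, f i * conj (gtrans χ n g i) * conj (χ k i) := by
  have hN : ((√N : ℝ) : ℂ) * (√N : ℝ) = N := by
    rw [← Complex.ofReal_mul, Real.mul_self_sqrt (Nat.cast_nonneg _), Complex.ofReal_natCast]
  rw [ip, mul_sum]
  refine sum_congr rfl fun i _ => ?_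
  simp only [atom, gtrans, map_mul, Complex.conj_ofReal, ← hN]
  ring

theorem sum_norm_ip_atom_sq (hχ : IsONB χ) (f g : Fin N → ℂ) (n : Fin N) :
    ∑ k, ‖ip f (atom χ g n k)‖ ^ 2 = N * ∑ i, ‖f i‖ ^ 2 * ‖gtrans χ n g i‖ ^ 2 := by
  simp_rw [ip_atom, norm_sqrt_mul_sq, ← mul_sum,
    sum_norm_sq_sum_mul_conj_of_orthonormal _ hχ.transpose, norm_mul, Complex.norm_conj, mul_pow]

theorem sum_sum_norm_ip_atom_sq (hχ : IsONB χ) (f g : Fin N → ℂ) :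
    ∑ n, ∑ k, ‖ip f (atom χ g n k)‖ ^ 2 = N * ∑ i, ‖f i‖ ^ 2 * nrm (gtrans χ i g) ^ 2 := by
  simp_rw [sum_norm_ip_atom_sq hχ, ← mul_sum]
  rw [sum_comm]
  simp_rw [← mul_sum, sum_norm_gtrans_apply_sq hχ, nrm_gtrans_sq hχ]

end GraphGabor

theorem stmt14_general {N : ℕ} (χ : Fin N → Fin N → ℂ) (hχ : IsONB χ)
    (g γ : Fin N → ℂ)
    (a b : ℝ)
    (ha : IsLeast {x : ℝ | ∃ i : Fin N,
      x = ‖ip (gtrans χ i γ) (gtrans χ i g)‖ / nrm (gtrans χ i γ)} a)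
    (hb : IsGreatest {x : ℝ | ∃ i : Fin N, x = nrm (gtrans χ i g)} b) :
    ∀ f : Fin N → ℂ,
      a ^ 2 * N * ∑ i, ‖f i‖ ^ 2 ≤
        (∑ n, ∑ k, ‖ip f (atom χ g n k)‖ ^ 2) ∧
      (∑ n, ∑ k, ‖ip f (atom χ g n k)‖ ^ 2) ≤
        b ^ 2 * N * ∑ i, ‖f i‖ ^ 2 := by
  intro f
  obtain ⟨⟨i₀, hi₀⟩, ha⟩ := ha
  have ha₀ : 0 ≤ a := hi₀ ▸ div_nonneg (norm_nonneg _) (nrm_nonneg _)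
  have hlow : ∀ i, a ≤ nrm (gtrans χ i g) := fun i =>
    (ha ⟨i, rfl⟩).trans (norm_ip_div_nrm_le _ _)
  have hup : ∀ i, nrm (gtrans χ i g) ≤ b := fun i => hb.2 ⟨i, rfl⟩
  have hsum : ∀ c : ℝ, c ^ 2 * N * ∑ i, ‖f i‖ ^ 2 = N * ∑ i, ‖f i‖ ^ 2 * c ^ 2 := fun c => by
    rw [← sum_mul]; ring
  rw [sum_sum_norm_ip_atom_sq hχ, hsum, hsum]
  constructor <;> gcongr with i
  exacts [hlow i, nrm_nonneg _, hup i]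

theorem stmt14 {N : ℕ} (χ : Fin N → Fin N → ℂ) (hχ : IsONB χ)
    (g γ : Fin N → ℂ)
    (hnd : ∀ n : Fin N, ip (gtrans χ n γ) (gtrans χ n g) ≠ 0)
    (a b : ℝ)
    (ha : IsLeast {x : ℝ | ∃ i : Fin N,
      x = ‖ip (gtrans χ i γ) (gtrans χ i g)‖ / nrm (gtrans χ i γ)} a)
    (hb : IsGreatest {x : ℝ | ∃ i : Fin N, x = nrm (gtrans χ i g)} b) :
    ∀ f : Fin N → ℂ,
      a ^ 2 * N * ∑ i, ‖f i‖ ^ 2 ≤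
        (∑ n, ∑ k, ‖ip f (atom χ g n k)‖ ^ 2) ∧
      (∑ n, ∑ k, ‖ip f (atom χ g n k)‖ ^ 2) ≤
        b ^ 2 * N * ∑ i, ‖f i‖ ^ 2 :=
  stmt14_general χ hχ g γ a b ha hb
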